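/- Let Ω be a topological space and let C(Ω, K_K(H)) be the Lie algebra of all continuous maps from Ω to the Lie algebra K_K(H) of skew-adjoint compact operators on H. Then every 2-local spatial derivation Δ on C(Ω, K_K(H)) implemented by elements from F(Ω, B_sk(H)) is a spatial derivation: there exists a ∈ F(Ω, B_sk(H)) such that Δ(x) = a x - x a for all x ∈ C(Ω, K_K(H)) (and a x - x a ∈ C(Ω, K_K(H)) for all x ∈ C(Ω, K_K(H))). -/

import Mathlib

/-- The Lie algebra `C(Ω, K_K(H))` of all continuous maps from a topological space `Ω`
to the skew-adjoint compact operators on `H` (operator-norm topology), viewed as a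
subset of `F(Ω, B_sk(H))`. -/
def contSkewCompact (Ω : Type*) [TopologicalSpace Ω]
    (H : Type*) [NormedAddCommGroup H] [InnerProductSpace ℂ H] [CompleteSpace H] :
    Set (Ω → H →L[ℂ] H) :=
  {x | Continuous x ∧ ∀ t, ContinuousLinearMap.adjoint (x t) = -(x t) ∧
        IsCompactOperator ⇑(x t)}


open scoped InnerProductSpace ComplexConjugate
open ContinuousLinearMap

noncomputable section
set_option linter.unusedSectionVars false
set_option maxHeartbeats 800000

variable {H : Type*} [NormedAddCommGroup H] [InnerProductSpace ℂ H] [CompleteSpace H]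

def rk (a b : H) : H →L[ℂ] H := (innerSL ℂ a).smulRight b

@[simp] lemma rk_apply (a b x : H) : rk a b x = ⟪a, x⟫_ℂ • b := rfl

lemma adjoint_rk (a b : H) : adjoint (rk a b) = rk b a := by
  refine ((ContinuousLinearMap.eq_adjoint_iff (rk b a) (rk a b)).mpr ?_).symm
  intro x y
  simp [rk_apply, inner_smul_left, inner_smul_right]
  ring_nf

lemma norm_rk_le (a b : H) : ‖rk a b‖ ≤ ‖a‖ * ‖b‖ := by
  refine ContinuousLinearMap.opNorm_le_bound _ (by positivity) (fun x => ?_)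
  rw [rk_apply, norm_smul]
  calc ‖⟪a,x⟫_ℂ‖ * ‖b‖ ≤ (‖a‖ * ‖x‖) * ‖b‖ := by
        gcongr; exact norm_inner_le_norm a x
    _ = ‖a‖ * ‖b‖ * ‖x‖ := by ring

lemma isCompact_rk (a b : H) : IsCompactOperator (rk a b) := by
  refine ⟨(fun c : ℂ => c • b) '' Metric.closedBall 0 ‖a‖, ?_, ?_⟩
  · exact (isCompact_closedBall 0 ‖a‖).image (by continuity)
  · refine Filter.mem_of_superset (Metric.closedBall_mem_nhds 0 zero_lt_one) ?_
    intro x hx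
    have hx1 : ‖x‖ ≤ 1 := by simpa using hx
    refine ⟨⟪a, x⟫_ℂ, ?_, rfl⟩
    simp only [Metric.mem_closedBall, dist_zero_right]
    calc ‖⟪a,x⟫_ℂ‖ ≤ ‖a‖ * ‖x‖ := norm_inner_le_norm a x
      _ ≤ ‖a‖ * 1 := by gcongr
      _ = ‖a‖ := mul_one _

variable (e : HilbertBasis ℕ ℂ H)

lemma inner_e (j k : ℕ) : ⟪e j, e k⟫_ℂ = if j = k then 1 else 0 :=
  orthonormal_iff_ite.mp e.orthonormal j k

lemma inner_e_self (k : ℕ) : ⟪e k, e k⟫_ℂ = 1 := by rw [inner_e]; simp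

lemma inner_e_ne {j k : ℕ} (h : j ≠ k) : ⟪e j, e k⟫_ℂ = 0 := by rw [inner_e]; simp [h]

lemma norm_e (k : ℕ) : ‖e k‖ = 1 := e.orthonormal.1 k

lemma vec_eq_zero {v : H} (h : ∀ j, ⟪e j, v⟫_ℂ = 0) : v = 0 := by
  have h2 : e.repr v = 0 := by
    ext j
    simpa [e.repr_apply_apply] using h j
  have := congrArg e.repr.symm h2
  simpa using this

lemma clm_ext_basis {A B : H →L[ℂ] H} (h : ∀ k, A (e k) = B (e k)) : A = B := by
  refine ContinuousLinearMap.ext_on (s := Set.range e) ?_ ?_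
  · rw [Submodule.dense_iff_topologicalClosure_eq_top]
    exact e.dense_span
  · rintro x ⟨k, rfl⟩; exact h k

/-! ### the weight sequence -/

def wR : ℕ → ℝ := fun k => (1/2) * (Real.sqrt 3 / 2)^k

lemma wR_pos (k : ℕ) : 0 < wR k := by
  have : (0:ℝ) < Real.sqrt 3 := Real.sqrt_pos.mpr (by norm_num)
  unfold wR; positivity

lemma wR_ne (k : ℕ) : (wR k : ℂ) ≠ 0 := by
  simpa using (wR_pos k).ne'

lemma wR_sq (k : ℕ) : (wR k)^2 = (1/4) * (3/4)^k := by
  unfold wR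
  rw [mul_pow, ← pow_mul, pow_mul']
  have h3 : (Real.sqrt 3 / 2)^2 = 3/4 := by
    rw [div_pow, Real.sq_sqrt (by norm_num : (3:ℝ) ≥ 0)]
    norm_num
  rw [h3]
  norm_num

lemma summable_wR : Summable wR := by
  apply Summable.mul_left
  apply summable_geometric_of_lt_one
  · positivity
  · rw [div_lt_one (by norm_num)]
    have := Real.sq_sqrt (by norm_num : (3:ℝ) ≥ 0)
    nlinarith [Real.sqrt_nonneg 3]

lemma summable_wR_sq : Summable (fun k => (wR k)^2) := by
  simp only [wR_sq]
  exact (summable_geometric_of_lt_one (by norm_num) (by norm_num)).mul_left _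

lemma tsum_wR_sq : ∑' k, (wR k)^2 = 1 := by
  simp only [wR_sq]
  rw [tsum_mul_left, tsum_geometric_of_lt_one (by norm_num) (by norm_num)]
  norm_num

lemma wR_sq_pair {m n : ℕ} (h : m ≠ n) : (wR m)^2 + (wR n)^2 < 1/2 := by
  have hb : ∀ k, (wR k)^2 ≤ 1/4 := by
    intro k
    rw [wR_sq]
    have : (3/4:ℝ)^k ≤ 1 := pow_le_one₀ (by norm_num) (by norm_num)
    nlinarith
  have hb1 : ∀ k, 1 ≤ k → (wR k)^2 ≤ 3/16 := by
    intro k hk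
    rw [wR_sq]
    have : (3/4:ℝ)^k ≤ (3/4)^1 := pow_le_pow_of_le_one (by norm_num) (by norm_num) hk
    nlinarith
  rcases Nat.lt_or_ge 0 m with hm | hm
  · have := hb1 m hm
    have := hb n
    linarith
  · have hm0 : m = 0 := by omega
    have hn : 1 ≤ n := by omega
    have := hb1 n hn
    have := hb m
    linarith

lemma one_sub_two_wR_sq_ne {m n : ℕ} (h : m ≠ n) :
    (1:ℂ) - 2*((wR m :ℂ)^2 + (wR n :ℂ)^2) ≠ 0 := by
  have hlt := wR_sq_pair h
  have : ((1:ℂ) - 2*((wR m :ℂ)^2 + (wR n :ℂ)^2)) =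
      ((1 - 2*((wR m)^2 + (wR n)^2) : ℝ) : ℂ) := by push_cast; ring
  rw [this]
  simp only [ne_eq, Complex.ofReal_eq_zero]
  intro hc
  rw [sub_eq_zero] at hc
  nlinarith

/-! ### the vector w and the Householder reflection -/

def wv : H := ∑' k, ((wR k : ℂ)) • (e k : H)

lemma summable_wv : Summable (fun k => ((wR k : ℂ)) • (e k : H)) := by
  apply Summable.of_norm
  have h : (fun k => ‖((wR k : ℂ)) • (e k : H)‖) = wR := by
    funext k
    rw [norm_smul, norm_e]
    simp [Complex.norm_real, abs_of_pos (wR_pos k)]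
  rw [h]
  exact summable_wR

lemma inner_e_wv (j : ℕ) : ⟪e j, wv e⟫_ℂ = (wR j : ℂ) := by
  have h1 : ⟪e j, wv e⟫_ℂ = ∑' k, ⟪e j, ((wR k : ℂ)) • (e k : H)⟫_ℂ :=
    (innerSL ℂ (e j)).map_tsum (summable_wv e)
  rw [h1, tsum_eq_single j]
  · show ⟪e j, ((wR j : ℂ)) • (e j : H)⟫_ℂ = (wR j : ℂ)
    rw [inner_smul_right, inner_e_self e, mul_one]
  · intro k hk
    show ⟪e j, ((wR k : ℂ)) • (e k : H)⟫_ℂ = 0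
    rw [inner_smul_right, inner_e_ne e (Ne.symm hk), mul_zero]

lemma inner_wv_e (j : ℕ) : ⟪wv e, e j⟫_ℂ = (wR j : ℂ) := by
  rw [← inner_conj_symm, inner_e_wv]
  simp

lemma inner_wv_wv : ⟪wv e, wv e⟫_ℂ = 1 := by
  have h1 : ⟪wv e, wv e⟫_ℂ = ∑' k, ⟪wv e, ((wR k : ℂ)) • (e k : H)⟫_ℂ :=
    (innerSL ℂ (wv e)).map_tsum (summable_wv e)
  rw [h1]
  have h2 : ∀ k, ⟪wv e, ((wR k : ℂ)) • (e k : H)⟫_ℂ = (((wR k)^2 : ℝ) : ℂ) := by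
    intro k
    rw [inner_smul_right, inner_wv_e]
    push_cast; ring
  rw [tsum_congr h2, ← Complex.ofReal_tsum, tsum_wR_sq]
  norm_num

def Wop : H →L[ℂ] H := 1 - (2:ℂ) • rk (wv e) (wv e)

lemma Wop_apply (x : H) : Wop e x = x - (2:ℂ) • (⟪wv e, x⟫_ℂ • wv e) := by
  simp [Wop, rk_apply]

lemma Wop_invol (x : H) : Wop e (Wop e x) = x := by
  rw [Wop_apply, Wop_apply]
  rw [inner_sub_right, inner_smul_right, inner_smul_right, inner_wv_wv]
  simp only [smul_smul, mul_one]
  module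

lemma adjoint_Wop : adjoint (Wop e) = Wop e := by
  unfold Wop
  rw [map_sub, map_smulₛₗ]
  have h1 : adjoint (1 : H →L[ℂ] H) = 1 := by
    rw [ContinuousLinearMap.one_def, adjoint_id]
  rw [h1, adjoint_rk, Complex.conj_ofNat]

/-! ### the diagonal operator u0 and its conjugate u1 -/

def lam : ℕ → ℝ := fun k => (2⁻¹)^(k+1)

lemma lam_pos (k : ℕ) : 0 < lam k := by unfold lam; positivity

lemma summable_lam : Summable lam := by
  have h : Summable (fun k : ℕ => (2⁻¹:ℝ)^k * 2⁻¹) :=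
    (summable_geometric_of_lt_one (by norm_num) (by norm_num)).mul_right _
  have h2 : (fun k : ℕ => (2⁻¹:ℝ)^k * 2⁻¹) = lam := by
    funext k; rw [← pow_succ]; rfl
  rwa [h2] at h

lemma lam_inj {j k : ℕ} (h : lam j = lam k) : j = k := by
  unfold lam at h
  have h2 : j + 1 = k + 1 :=
    pow_right_injective₀ (by norm_num : (0:ℝ) < 2⁻¹) (by norm_num : (2⁻¹:ℝ) ≠ 1) h
  omega

def cI : ℕ → ℂ := fun k => (lam k : ℂ) * Complex.I

lemma cI_inj {j k : ℕ} (h : cI j = cI k) : j = k := by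
  unfold cI at h
  have h2 : (lam j : ℂ) = (lam k : ℂ) := by
    field_simp at h
    exact_mod_cast h
  exact lam_inj (by exact_mod_cast h2)

lemma conj_cI (k : ℕ) : (starRingEnd ℂ) (cI k) = - cI k := by
  unfold cI
  simp

def u0 : H →L[ℂ] H := ∑' k, cI k • rk (e k : H) (e k : H)

lemma summable_u0 : Summable (fun k => cI k • rk (e k : H) (e k : H)) := by
  apply Summable.of_norm
  refine Summable.of_nonneg_of_le (fun k => norm_nonneg _) (fun k => ?_) summable_lam
  calc ‖cI k • rk (e k : H) (e k : H)‖ = ‖cI k‖ * ‖rk (e k : H) (e k : H)‖ := norm_smul _ _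
      _ ≤ ‖cI k‖ * (‖(e k : H)‖ * ‖(e k : H)‖) := by gcongr; exact norm_rk_le _ _
      _ = lam k := by
          rw [norm_e]
          have : ‖cI k‖ = lam k := by
            unfold cI
            rw [norm_mul, Complex.norm_I, Complex.norm_real]
            simp [abs_of_pos (lam_pos k)]
          rw [this]; ring

lemma u0_apply_e (k : ℕ) : u0 e (e k) = cI k • (e k : H) := by
  have h1 : u0 e (e k) = ∑' j, (cI j • rk (e j : H) (e j : H)) (e k) :=
    (ContinuousLinearMap.apply ℂ H (e k)).map_tsum (summable_u0 e)
  rw [h1, tsum_eq_single k]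
  · rw [ContinuousLinearMap.smul_apply, rk_apply, inner_e_self e, one_smul]
  · intro j hj
    rw [ContinuousLinearMap.smul_apply, rk_apply, inner_e_ne e hj, zero_smul, smul_zero]

lemma adjoint_u0 : adjoint (u0 e) = - u0 e := by
  have h1 : adjoint (u0 e) =
      ∑' k, adjoint (cI k • rk (e k : H) (e k : H)) := by
    exact (ContinuousLinearMap.adjoint.toLinearIsometry.toContinuousLinearMap).map_tsum
      (summable_u0 e)
  rw [h1]
  have h2 : ∀ k, adjoint (cI k • rk (e k : H) (e k : H)) =
      - (cI k • rk (e k : H) (e k : H)) := by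
    intro k
    rw [map_smulₛₗ, adjoint_rk, conj_cI]
    simp [neg_smul]
  rw [tsum_congr h2, tsum_neg]
  rfl

lemma compact_u0 : IsCompactOperator (u0 e) := by
  have hsum := (summable_u0 e).hasSum
  refine isCompactOperator_of_tendsto hsum ?_
  refine Filter.Eventually.of_forall (fun s => ?_)
  classical
  induction s using Finset.cons_induction with
  | empty => simpa using isCompactOperator_zero
  | cons a s ha ih =>
      rw [Finset.sum_cons]
      have h1 : IsCompactOperator (cI a • rk (e a : H) (e a : H)) := by
        have := (isCompact_rk (e a : H) (e a : H)).smul (cI a)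
        have hco : ⇑(cI a • rk (e a : H) (e a : H)) = cI a • ⇑(rk (e a : H) (e a : H)) := rfl
        rwa [hco]
      have hadd : ⇑(cI a • rk (e a : H) (e a : H) + ∑ k ∈ s, cI k • rk (e k : H) (e k : H))
          = ⇑(cI a • rk (e a : H) (e a : H)) + ⇑(∑ k ∈ s, cI k • rk (e k : H) (e k : H)) := rfl
      rw [hadd]
      exact h1.add ih

def u1 : H →L[ℂ] H := (Wop e).comp ((u0 e).comp (Wop e))

lemma u1_apply (x : H) : u1 e x = Wop e (u0 e (Wop e x)) := rfl

lemma adjoint_u1 : adjoint (u1 e) = - u1 e := by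
  unfold u1
  rw [adjoint_comp, adjoint_comp, adjoint_Wop, adjoint_u0]
  apply ContinuousLinearMap.ext
  intro x
  simp [u1_apply]

lemma compact_u1 : IsCompactOperator (u1 e) := by
  have h1 : IsCompactOperator (⇑(u0 e) ∘ ⇑(Wop e)) :=
    (compact_u0 e).comp_clm (Wop e)
  have h2 : IsCompactOperator (⇑(Wop e) ∘ (⇑(u0 e) ∘ ⇑(Wop e))) :=
    h1.continuous_comp (Wop e).continuous
  exact h2

lemma u1_f (k : ℕ) : u1 e (Wop e (e k)) = cI k • Wop e (e k) := by
  rw [u1_apply, Wop_invol, u0_apply_e, map_smul]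

/-! ### commutant lemmas -/

lemma comm_u0_diag {c : H →L[ℂ] H} (h : c.comp (u0 e) = (u0 e).comp c) (k : ℕ) :
    c (e k) = ⟪e k, c (e k)⟫_ℂ • (e k : H) := by
  have hcomm : ∀ x, c (u0 e x) = u0 e (c x) := fun x => by
    rw [← ContinuousLinearMap.comp_apply, h, ContinuousLinearMap.comp_apply]
  have entry : ∀ j, j ≠ k → ⟪e j, c (e k)⟫_ℂ = 0 := by
    intro j hj
    have h1 : u0 e (c (e k)) = cI k • c (e k) := by
      rw [← hcomm, u0_apply_e, map_smul]
    have h2 : ⟪e j, u0 e (c (e k))⟫_ℂ = cI j * ⟪e j, c (e k)⟫_ℂ := by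
      have h3 : ⟪e j, u0 e (c (e k))⟫_ℂ = ⟪adjoint (u0 e) (e j), c (e k)⟫_ℂ :=
        (ContinuousLinearMap.adjoint_inner_left (u0 e) (c (e k)) (e j)).symm
      rw [h3, adjoint_u0]
      show ⟪-(u0 e (e j)), c (e k)⟫_ℂ = _
      rw [u0_apply_e, inner_neg_left, inner_smul_left, conj_cI]
      ring
    rw [h1, inner_smul_right] at h2
    have hne : cI k - cI j ≠ 0 := by
      intro hc
      exact hj (cI_inj (sub_eq_zero.mp hc)).symm
    have : (cI k - cI j) * ⟪e j, c (e k)⟫_ℂ = 0 := by ring_nf; linear_combination h2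
    rcases mul_eq_zero.mp this with h | h
    · exact absurd h hne
    · exact h
  apply sub_eq_zero.mp
  apply vec_eq_zero e
  intro j
  rcases eq_or_ne j k with rfl | hj
  · rw [inner_sub_right, inner_smul_right, inner_e_self e]
    ring
  · rw [inner_sub_right, inner_smul_right, inner_e_ne e hj, entry j hj]
    ring

lemma comm_u1_eig {c : H →L[ℂ] H} (h : c.comp (u1 e) = (u1 e).comp c) (k : ℕ) :
    c (Wop e (e k)) = ⟪e k, Wop e (c (Wop e (e k)))⟫_ℂ • Wop e (e k) := by
  have hcomm : ∀ x, c (u1 e x) = u1 e (c x) := fun x => by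
    rw [← ContinuousLinearMap.comp_apply, h, ContinuousLinearMap.comp_apply]
  set c' : H →L[ℂ] H := (Wop e).comp (c.comp (Wop e)) with hc'
  have hc'comm : c'.comp (u0 e) = (u0 e).comp c' := by
    apply ContinuousLinearMap.ext
    intro x
    show Wop e (c (Wop e (u0 e x))) = u0 e (Wop e (c (Wop e x)))
    have h1 : Wop e (u0 e x) = u1 e (Wop e x) := by
      rw [u1_apply, Wop_invol]
    rw [h1, hcomm, u1_apply, Wop_invol]
  have := comm_u0_diag e hc'comm k
  have h2 : c' (e k) = Wop e (c (Wop e (e k))) := rfl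
  rw [h2] at this
  have h3 := congrArg (Wop e) this
  rw [Wop_invol, map_smul] at h3
  exact h3

/-! ### finite rank skew generators -/

def Fop (m n : ℕ) : H →L[ℂ] H := rk (e n : H) (e m : H) - rk (e m : H) (e n : H)

def Gop (m n : ℕ) : H →L[ℂ] H := Complex.I • (rk (e n : H) (e m : H) + rk (e m : H) (e n : H))

def Pop (n : ℕ) : H →L[ℂ] H := Complex.I • rk (e n : H) (e n : H)

lemma Fop_apply (m n : ℕ) (x : H) :
    Fop e m n x = ⟪e n, x⟫_ℂ • (e m : H) - ⟪e m, x⟫_ℂ • (e n : H) := rfl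

lemma Gop_apply (m n : ℕ) (x : H) :
    Gop e m n x = Complex.I • (⟪e n, x⟫_ℂ • (e m : H) + ⟪e m, x⟫_ℂ • (e n : H)) := rfl

lemma Pop_apply (n : ℕ) (x : H) :
    Pop e n x = Complex.I • (⟪e n, x⟫_ℂ • (e n : H)) := rfl

lemma adjoint_Fop (m n : ℕ) : adjoint (Fop e m n) = - Fop e m n := by
  unfold Fop
  rw [map_sub, adjoint_rk, adjoint_rk]
  abel

lemma adjoint_Gop (m n : ℕ) : adjoint (Gop e m n) = - Gop e m n := by
  unfold Gop
  rw [map_smulₛₗ, map_add, adjoint_rk, adjoint_rk]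
  simp only [Complex.conj_I, neg_smul]
  congr 1
  abel

lemma adjoint_Pop (n : ℕ) : adjoint (Pop e n) = - Pop e n := by
  unfold Pop
  rw [map_smulₛₗ, adjoint_rk]
  simp [Complex.conj_I]

lemma compact_Fop (m n : ℕ) : IsCompactOperator (Fop e m n) := by
  have h := (isCompact_rk (e n : H) (e m : H)).sub (isCompact_rk (e m : H) (e n : H))
  exact h

lemma compact_Gop (m n : ℕ) : IsCompactOperator (Gop e m n) := by
  have h := ((isCompact_rk (e n : H) (e m : H)).add (isCompact_rk (e m : H) (e n : H))).smul
    Complex.I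
  exact h

lemma compact_Pop (n : ℕ) : IsCompactOperator (Pop e n) := by
  have h := (isCompact_rk (e n : H) (e n : H)).smul Complex.I
  exact h

/-! ### the two–dimensional eigenvalue argument -/

lemma skew_inner {c : H →L[ℂ] H} (hskew : adjoint c = -c) (x z : H) :
    ⟪x, c z⟫_ℂ = -⟪c x, z⟫_ℂ := by
  rw [← ContinuousLinearMap.adjoint_inner_left c z x, hskew]
  simp [inner_neg_left]

lemma Wop_e (k : ℕ) : Wop e (e k) = e k - ((2 * wR k : ℝ) : ℂ) • wv e := by
  rw [Wop_apply, inner_wv_e, smul_smul]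
  norm_num

lemma inner_e_Wop_e (j k : ℕ) :
    ⟪e j, Wop e (e k)⟫_ℂ = ((if j = k then 1 else 0) - (2 * wR k * wR j : ℝ) : ℂ) := by
  rw [Wop_e, inner_sub_right, inner_smul_right, inner_e, inner_e_wv]
  push_cast
  split <;> ring

lemma eig_vk {c : H →L[ℂ] H} (hskew : adjoint c = -c) {m n : ℕ} (hmn : m ≠ n)
    {am bm an bn : ℂ}
    (hm : c (e m) = am • e m + bm • e n) (hn : c (e n) = an • e m + bn • e n)
    {k : ℕ} {μ : ℂ} (h : c (Wop e (e k)) = μ • Wop e (e k)) :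
    c (⟪e m, Wop e (e k)⟫_ℂ • e m + ⟪e n, Wop e (e k)⟫_ℂ • e n)
      = μ • (⟪e m, Wop e (e k)⟫_ℂ • e m + ⟪e n, Wop e (e k)⟫_ℂ • e n) := by
  set f : H := Wop e (e k) with hf
  set v : H := ⟪e m, f⟫_ℂ • e m + ⟪e n, f⟫_ℂ • e n with hv
  set q : H := f - v with hq
  have hqm : ⟪e m, q⟫_ℂ = 0 := by
    rw [hq, inner_sub_right, hv, inner_add_right, inner_smul_right, inner_smul_right,
      inner_e_self e, inner_e_ne e hmn]
    ring
  have hqn : ⟪e n, q⟫_ℂ = 0 := by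
    rw [hq, inner_sub_right, hv, inner_add_right, inner_smul_right, inner_smul_right,
      inner_e_self e, inner_e_ne e (Ne.symm hmn)]
    ring
  have hqc_m : ⟪e m, c q⟫_ℂ = 0 := by
    rw [skew_inner hskew, hm, inner_add_left, inner_smul_left, inner_smul_left, hqm, hqn]
    ring
  have hqc_n : ⟪e n, c q⟫_ℂ = 0 := by
    rw [skew_inner hskew, hn, inner_add_left, inner_smul_left, inner_smul_left, hqm, hqn]
    ring
  have hfvq : c f = c v + c q := by rw [← map_add]; congr 1; rw [hq]; abel
  have hcv : c v = (⟪e m, f⟫_ℂ * am + ⟪e n, f⟫_ℂ * an) • e m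
      + (⟪e m, f⟫_ℂ * bm + ⟪e n, f⟫_ℂ * bn) • e n := by
    rw [hv, map_add, map_smul, map_smul, hm, hn]
    simp only [smul_add, smul_smul]
    module
  have hE1 : ⟪e m, f⟫_ℂ * am + ⟪e n, f⟫_ℂ * an = μ * ⟪e m, f⟫_ℂ := by
    have h1 : ⟪e m, c v⟫_ℂ = ⟪e m, f⟫_ℂ * am + ⟪e n, f⟫_ℂ * an := by
      rw [hcv, inner_add_right, inner_smul_right, inner_smul_right,
        inner_e_self e, inner_e_ne e hmn]
      ring
    have h2 : ⟪e m, c v⟫_ℂ = μ * ⟪e m, f⟫_ℂ := by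
      have h3 : ⟪e m, c f⟫_ℂ = μ * ⟪e m, f⟫_ℂ := by rw [h, inner_smul_right]
      have h4 := hfvq
      have h5 : ⟪e m, c f⟫_ℂ = ⟪e m, c v⟫_ℂ + ⟪e m, c q⟫_ℂ := by
        rw [h4, inner_add_right]
      rw [h3, hqc_m] at h5
      linear_combination -h5
    rw [← h1, h2]
  have hE2 : ⟪e m, f⟫_ℂ * bm + ⟪e n, f⟫_ℂ * bn = μ * ⟪e n, f⟫_ℂ := by
    have h1 : ⟪e n, c v⟫_ℂ = ⟪e m, f⟫_ℂ * bm + ⟪e n, f⟫_ℂ * bn := by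
      rw [hcv, inner_add_right, inner_smul_right, inner_smul_right,
        inner_e_self e, inner_e_ne e (Ne.symm hmn)]
      ring
    have h2 : ⟪e n, c v⟫_ℂ = μ * ⟪e n, f⟫_ℂ := by
      have h3 : ⟪e n, c f⟫_ℂ = μ * ⟪e n, f⟫_ℂ := by rw [h, inner_smul_right]
      have h5 : ⟪e n, c f⟫_ℂ = ⟪e n, c v⟫_ℂ + ⟪e n, c q⟫_ℂ := by
        rw [hfvq, inner_add_right]
      rw [h3, hqc_n] at h5
      linear_combination -h5
    rw [← h1, h2]
  rw [hcv, hE1, hE2, smul_add, smul_smul, smul_smul]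

lemma indep2 {m n : ℕ} (hmn : m ≠ n) {A B : ℂ}
    (h : A • (e m : H) + B • (e n : H) = 0) : A = 0 ∧ B = 0 := by
  constructor
  · have := congrArg (fun z => ⟪e m, z⟫_ℂ) h
    simp only [inner_add_right, inner_smul_right, inner_zero_right] at this
    rw [inner_e_self e, inner_e_ne e hmn] at this
    simpa using this
  · have := congrArg (fun z => ⟪e n, z⟫_ℂ) h
    simp only [inner_add_right, inner_smul_right, inner_zero_right] at this
    rw [inner_e_self e, inner_e_ne e (Ne.symm hmn)] at this
    simpa using this

lemma key2dim {m n : ℕ} (hmn : m ≠ n) {c : H →L[ℂ] H}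
    (hskew : adjoint c = -c)
    (hc : ∀ k, ∃ μ : ℂ, c (Wop e (e k)) = μ • Wop e (e k))
    {am bm an bn : ℂ}
    (hm : c (e m) = am • e m + bm • e n)
    (hn : c (e n) = an • e m + bn • e n) :
    ∃ μ : ℂ, c (e m) = μ • e m ∧ c (e n) = μ • e n := by
  obtain ⟨μ0, h0⟩ := hc (m + n + 1)
  obtain ⟨μm, hm2⟩ := hc m
  obtain ⟨μn, hn2⟩ := hc n
  set k0 : ℕ := m + n + 1 with hk0
  have hmk0 : m ≠ k0 := by omega
  have hnk0 : n ≠ k0 := by omega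
  set a : ℂ := (wR m : ℂ) with ha
  set b : ℂ := (wR n : ℂ) with hb
  set t : ℂ := (wR k0 : ℂ) with ht
  have hane : a ≠ 0 := wR_ne m
  have hbne : b ≠ 0 := wR_ne n
  have htne : t ≠ 0 := wR_ne k0
  set Y : H := a • e m + b • e n with hY
  -- eigen equation for Y
  have hY0 : c Y = μ0 • Y := by
    have h1 := eig_vk e hskew hmn hm hn h0
    rw [inner_e_Wop_e, inner_e_Wop_e, if_neg hmk0, if_neg hnk0] at h1
    have hc1 : ((0 : ℂ) - ((2 * wR k0 * wR m : ℝ) : ℂ)) = -(2*t) * a := by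
      push_cast; ring
    have hc2 : ((0 : ℂ) - ((2 * wR k0 * wR n : ℝ) : ℂ)) = -(2*t) * b := by
      push_cast; ring
    rw [hc1, hc2] at h1
    have hcomb : (-(2*t) * a) • (e m : H) + (-(2*t) * b) • (e n : H) = (-(2*t)) • Y := by
      rw [hY]; module
    rw [hcomb, map_smul, smul_comm] at h1
    exact smul_right_injective H (by simpa using htne) h1
  -- eigen equation for v_m and v_n
  have hvm : c ((e m : H) - (2*a) • Y) = μm • ((e m : H) - (2*a) • Y) := by
    have h1 := eig_vk e hskew hmn hm hn hm2
    rw [inner_e_Wop_e, inner_e_Wop_e, if_pos rfl, if_neg (Ne.symm hmn)] at h1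
    have hc1 : ((1 : ℂ) - ((2 * wR m * wR m : ℝ) : ℂ)) = 1 - 2*a*a := by push_cast; ring
    have hc2 : ((0 : ℂ) - ((2 * wR m * wR n : ℝ) : ℂ)) = -(2*a)*b := by push_cast; ring
    rw [hc1, hc2] at h1
    have hcomb : ((1 : ℂ) - 2*a*a) • (e m : H) + (-(2*a) * b) • (e n : H)
        = (e m : H) - (2*a) • Y := by
      rw [hY]; module
    rwa [hcomb] at h1
  have hvn : c ((e n : H) - (2*b) • Y) = μn • ((e n : H) - (2*b) • Y) := by
    have h1 := eig_vk e hskew hmn hm hn hn2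
    rw [inner_e_Wop_e, inner_e_Wop_e, if_neg hmn, if_pos rfl] at h1
    have hc1 : ((0 : ℂ) - ((2 * wR n * wR m : ℝ) : ℂ)) = -(2*b)*a := by push_cast; ring
    have hc2 : ((1 : ℂ) - ((2 * wR n * wR n : ℝ) : ℂ)) = 1 - 2*b*b := by push_cast; ring
    rw [hc1, hc2] at h1
    have hcomb : (-(2*b) * a) • (e m : H) + ((1 : ℂ) - 2*b*b) • (e n : H)
        = (e n : H) - (2*b) • Y := by
      rw [hY]; module
    rwa [hcomb] at h1
  -- express c (e m), c (e n)
  have hem : c (e m) = μm • (e m : H) + (2*a*(μ0 - μm)) • Y := by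
    have h1 : c (e m) = c ((e m : H) - (2*a) • Y) + (2*a) • c Y := by
      rw [map_sub, map_smul]; abel
    rw [h1, hvm, hY0]
    module
  have hen : c (e n) = μn • (e n : H) + (2*b*(μ0 - μn)) • Y := by
    have h1 : c (e n) = c ((e n : H) - (2*b) • Y) + (2*b) • c Y := by
      rw [map_sub, map_smul]; abel
    rw [h1, hvn, hY0]
    module
  -- the linear relation coming from Y = a e_m + b e_n
  have hYc : c Y = a • c (e m) + b • c (e n) := by
    rw [hY, map_add, map_smul, map_smul]
  have combined : μ0 • Y = a • (μm • (e m : H) + (2*a*(μ0 - μm)) • Y)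
      + b • (μn • (e n : H) + (2*b*(μ0 - μn)) • Y) := by
    rw [← hY0, hYc, hem, hen]
  have hz : (μ0*a - (a*μm + (2*a^2*(μ0 - μm) + 2*b^2*(μ0 - μn))*a)) • (e m : H)
      + (μ0*b - (b*μn + (2*a^2*(μ0 - μm) + 2*b^2*(μ0 - μn))*b)) • (e n : H) = 0 := by
    linear_combination (norm := module) combined
  obtain ⟨hz1, hz2⟩ := indep2 e hmn hz
  have eq1 : μ0 = μm + (2*a^2*(μ0 - μm) + 2*b^2*(μ0 - μn)) := by
    have h1 : (μ0 - (μm + (2*a^2*(μ0 - μm) + 2*b^2*(μ0 - μn)))) * a = 0 := by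
      linear_combination hz1
    rcases mul_eq_zero.mp h1 with h | h
    · linear_combination h
    · exact absurd h hane
  have eq2 : μ0 = μn + (2*a^2*(μ0 - μm) + 2*b^2*(μ0 - μn)) := by
    have h1 : (μ0 - (μn + (2*a^2*(μ0 - μm) + 2*b^2*(μ0 - μn)))) * b = 0 := by
      linear_combination hz2
    rcases mul_eq_zero.mp h1 with h | h
    · linear_combination h
    · exact absurd h hbne
  have hmn_eq : μm = μn := by linear_combination eq2 - eq1
  have hfactor : (1 - 2*(a^2 + b^2)) * (μ0 - μm) = 0 := by
    linear_combination eq1 + 2*b^2*hmn_eq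
  have hne : (1:ℂ) - 2*(a^2 + b^2) ≠ 0 := by
    have h2 := one_sub_two_wR_sq_ne (m := m) (n := n) hmn
    intro hcon
    apply h2
    rw [ha, hb] at hcon
    linear_combination hcon
  have hμ : μ0 = μm := by
    rcases mul_eq_zero.mp hfactor with h | h
    · exact absurd h hne
    · linear_combination h
  refine ⟨μm, ?_, ?_⟩
  · rw [hem, hμ]
    module
  · rw [hen, ← hmn_eq, hμ]
    module

/-! ### basis action of the generators -/

lemma Fop_e_n {m n : ℕ} (hmn : m ≠ n) : Fop e m n (e n) = (e m : H) := by
  rw [Fop_apply, inner_e_self e, inner_e_ne e hmn, one_smul, zero_smul, sub_zero]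

lemma Fop_e_m {m n : ℕ} (hmn : m ≠ n) : Fop e m n (e m) = -(e n : H) := by
  rw [Fop_apply, inner_e_self e, inner_e_ne e (Ne.symm hmn), one_smul, zero_smul, zero_sub]

lemma Fop_e_j {m n j : ℕ} (hj1 : j ≠ m) (hj2 : j ≠ n) : Fop e m n (e j) = 0 := by
  rw [Fop_apply, inner_e_ne e (Ne.symm hj2), inner_e_ne e (Ne.symm hj1)]
  simp

lemma Gop_e_n {m n : ℕ} (hmn : m ≠ n) : Gop e m n (e n) = Complex.I • (e m : H) := by
  rw [Gop_apply, inner_e_self e, inner_e_ne e hmn, one_smul, zero_smul, add_zero]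

lemma Gop_e_m {m n : ℕ} (hmn : m ≠ n) : Gop e m n (e m) = Complex.I • (e n : H) := by
  rw [Gop_apply, inner_e_self e, inner_e_ne e (Ne.symm hmn), one_smul, zero_smul, zero_add]

lemma Gop_e_j {m n j : ℕ} (hj1 : j ≠ m) (hj2 : j ≠ n) : Gop e m n (e j) = 0 := by
  rw [Gop_apply, inner_e_ne e (Ne.symm hj2), inner_e_ne e (Ne.symm hj1)]
  simp

lemma Pop_e_n (n : ℕ) : Pop e n (e n) = Complex.I • (e n : H) := by
  rw [Pop_apply, inner_e_self e, one_smul]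

lemma Pop_e_j {n j : ℕ} (hj : j ≠ n) : Pop e n (e j) = 0 := by
  rw [Pop_apply, inner_e_ne e (Ne.symm hj)]
  simp

/-! ### commutator rearrangement helpers -/

lemma comm_of_bracket_eq {A B V : H →L[ℂ] H}
    (h : A.comp V - V.comp A = B.comp V - V.comp B) :
    (A - B).comp V = V.comp (A - B) := by
  ext z
  have hz := ContinuousLinearMap.ext_iff.mp h z
  simp only [ContinuousLinearMap.comp_apply, ContinuousLinearMap.sub_apply, map_sub] at hz ⊢
  linear_combination (norm := module) hz

lemma bracket_eq_of_comm {A B V : H →L[ℂ] H}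
    (h : (A - B).comp V = V.comp (A - B)) :
    A.comp V - V.comp A = B.comp V - V.comp B := by
  ext z
  have hz := ContinuousLinearMap.ext_iff.mp h z
  simp only [ContinuousLinearMap.comp_apply, ContinuousLinearMap.sub_apply, map_sub] at hz ⊢
  linear_combination (norm := module) hz

/-! ### the main implementation steps -/

lemma step_c_em_en {m n : ℕ} (hmn : m ≠ n) {B A A' : H →L[ℂ] H}
    (hBskew : adjoint B = -B) (hA'skew : adjoint A' = -A')
    (hd : (A - B).comp (u0 e) = (u0 e).comp (A - B))
    (hc : (A' - B).comp (u1 e) = (u1 e).comp (A' - B))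
    (hEm : ∃ α β : ℂ, (A - A') (e m) = α • e m + β • e n)
    (hEn : ∃ α β : ℂ, (A - A') (e n) = α • e m + β • e n) :
    ∃ μ : ℂ, (A' - B) (e m) = μ • e m ∧ (A' - B) (e n) = μ • e n := by
  have hcskew : adjoint (A' - B) = -(A' - B) := by
    rw [map_sub, hA'skew, hBskew]; abel
  have heig : ∀ k, ∃ μ : ℂ, (A' - B) (Wop e (e k)) = μ • Wop e (e k) :=
    fun k => ⟨_, comm_u1_eig e hc k⟩
  obtain ⟨α, β, hEm⟩ := hEm
  obtain ⟨α', β', hEn⟩ := hEn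
  obtain ⟨κm, hκm⟩ : ∃ κ : ℂ, (A - B) (e m) = κ • e m := ⟨_, comm_u0_diag e hd m⟩
  obtain ⟨κn, hκn⟩ : ∃ κ : ℂ, (A - B) (e n) = κ • e n := ⟨_, comm_u0_diag e hd n⟩
  have hm : (A' - B) (e m) = (κm - α) • e m + (-β) • e n := by
    have hsplit : (A' - B) (e m) = (A - B) (e m) - (A - A') (e m) := by
      simp only [ContinuousLinearMap.sub_apply]; abel
    rw [hsplit, hκm, hEm]
    module
  have hn : (A' - B) (e n) = (-α') • e m + (κn - β') • e n := by
    have hsplit : (A' - B) (e n) = (A - B) (e n) - (A - A') (e n) := by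
      simp only [ContinuousLinearMap.sub_apply]; abel
    rw [hsplit, hκn, hEn]
    module
  exact key2dim e hmn hcskew heig hm hn

lemma stepF {m n : ℕ} (hmn : m ≠ n) {B A A' : H →L[ℂ] H}
    (hBskew : adjoint B = -B) (hA'skew : adjoint A' = -A')
    (hd : (A - B).comp (u0 e) = (u0 e).comp (A - B))
    (hc : (A' - B).comp (u1 e) = (u1 e).comp (A' - B))
    (hE : (A - A').comp (Fop e m n) = (Fop e m n).comp (A - A')) :
    A'.comp (Fop e m n) - (Fop e m n).comp A'
      = B.comp (Fop e m n) - (Fop e m n).comp B := by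
  have hEpt : ∀ x, (A - A') (Fop e m n x) = Fop e m n ((A - A') x) :=
    fun x => by
      have := ContinuousLinearMap.ext_iff.mp hE x
      simpa only [ContinuousLinearMap.comp_apply] using this
  have hEm : ∃ α β : ℂ, (A - A') (e m) = α • e m + β • e n := by
    refine ⟨⟪e n, (A - A') (e n)⟫_ℂ, -⟪e m, (A - A') (e n)⟫_ℂ, ?_⟩
    have h1 : (A - A') (e m) = Fop e m n ((A - A') (e n)) := by
      rw [← hEpt, Fop_e_n e hmn]
    rw [h1, Fop_apply]
    module
  have hEn : ∃ α β : ℂ, (A - A') (e n) = α • e m + β • e n := by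
    refine ⟨-⟪e n, (A - A') (e m)⟫_ℂ, ⟪e m, (A - A') (e m)⟫_ℂ, ?_⟩
    have h1 : (A - A') (e n) = -Fop e m n ((A - A') (e m)) := by
      rw [← hEpt, Fop_e_m e hmn]
      simp only [map_neg]
      abel
    rw [h1, Fop_apply]
    module
  obtain ⟨μ, hμm, hμn⟩ := step_c_em_en e hmn hBskew hA'skew hd hc hEm hEn
  apply bracket_eq_of_comm
  apply clm_ext_basis e
  intro j
  simp only [ContinuousLinearMap.comp_apply]
  rcases eq_or_ne j m with rfl | hjm
  · rw [Fop_e_m e hmn, map_neg, hμn, hμm, map_smul, Fop_e_m e hmn]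
    try module
  rcases eq_or_ne j n with rfl | hjn
  · rw [Fop_e_n e hmn, hμm, hμn, map_smul, Fop_e_n e hmn]
    try module
  · rw [Fop_e_j e hjm hjn, map_zero, Fop_apply]
    have hskewc : adjoint (A' - B) = -(A' - B) := by
      rw [map_sub, hA'skew, hBskew]; abel
    have h1 : ⟪e n, (A' - B) (e j)⟫_ℂ = 0 := by
      rw [skew_inner hskewc, hμn, inner_smul_left, inner_e_ne e (Ne.symm hjn)]
      ring
    have h2 : ⟪e m, (A' - B) (e j)⟫_ℂ = 0 := by
      rw [skew_inner hskewc, hμm, inner_smul_left, inner_e_ne e (Ne.symm hjm)]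
      ring
    rw [h1, h2]
    simp

lemma stepG {m n : ℕ} (hmn : m ≠ n) {B A A' : H →L[ℂ] H}
    (hBskew : adjoint B = -B) (hA'skew : adjoint A' = -A')
    (hd : (A - B).comp (u0 e) = (u0 e).comp (A - B))
    (hc : (A' - B).comp (u1 e) = (u1 e).comp (A' - B))
    (hE : (A - A').comp (Gop e m n) = (Gop e m n).comp (A - A')) :
    A'.comp (Gop e m n) - (Gop e m n).comp A'
      = B.comp (Gop e m n) - (Gop e m n).comp B := by
  have hEpt : ∀ x, (A - A') (Gop e m n x) = Gop e m n ((A - A') x) :=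
    fun x => by
      have := ContinuousLinearMap.ext_iff.mp hE x
      simpa only [ContinuousLinearMap.comp_apply] using this
  have hIne : (Complex.I : ℂ) ≠ 0 := Complex.I_ne_zero
  have hEm : ∃ α β : ℂ, (A - A') (e m) = α • e m + β • e n := by
    refine ⟨⟪e n, (A - A') (e n)⟫_ℂ, ⟪e m, (A - A') (e n)⟫_ℂ, ?_⟩
    have h1 : Complex.I • (A - A') (e m) = Gop e m n ((A - A') (e n)) := by
      have h2 := hEpt (e n)
      rw [Gop_e_n e hmn, map_smul] at h2
      exact h2
    rw [Gop_apply] at h1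
    exact smul_right_injective H hIne h1
  have hEn : ∃ α β : ℂ, (A - A') (e n) = α • e m + β • e n := by
    refine ⟨⟪e n, (A - A') (e m)⟫_ℂ, ⟪e m, (A - A') (e m)⟫_ℂ, ?_⟩
    have h1 : Complex.I • (A - A') (e n) = Gop e m n ((A - A') (e m)) := by
      have h2 := hEpt (e m)
      rw [Gop_e_m e hmn, map_smul] at h2
      exact h2
    rw [Gop_apply] at h1
    exact smul_right_injective H hIne h1
  obtain ⟨μ, hμm, hμn⟩ := step_c_em_en e hmn hBskew hA'skew hd hc hEm hEn
  apply bracket_eq_of_comm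
  apply clm_ext_basis e
  intro j
  simp only [ContinuousLinearMap.comp_apply]
  rcases eq_or_ne j m with rfl | hjm
  · rw [Gop_e_m e hmn, map_smul, hμn, hμm, map_smul, Gop_e_m e hmn]
    try module
  rcases eq_or_ne j n with rfl | hjn
  · rw [Gop_e_n e hmn, map_smul, hμm, hμn, map_smul, Gop_e_n e hmn]
    try module
  · rw [Gop_e_j e hjm hjn, map_zero, Gop_apply]
    have hskewc : adjoint (A' - B) = -(A' - B) := by
      rw [map_sub, hA'skew, hBskew]; abel
    have h1 : ⟪e n, (A' - B) (e j)⟫_ℂ = 0 := by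
      rw [skew_inner hskewc, hμn, inner_smul_left, inner_e_ne e (Ne.symm hjn)]
      ring
    have h2 : ⟪e m, (A' - B) (e j)⟫_ℂ = 0 := by
      rw [skew_inner hskewc, hμm, inner_smul_left, inner_e_ne e (Ne.symm hjm)]
      ring
    rw [h1, h2]
    simp

lemma stepP (n : ℕ) {B A : H →L[ℂ] H}
    (hd : (A - B).comp (u0 e) = (u0 e).comp (A - B)) :
    A.comp (Pop e n) - (Pop e n).comp A
      = B.comp (Pop e n) - (Pop e n).comp B := by
  apply bracket_eq_of_comm
  apply clm_ext_basis e
  intro j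
  simp only [ContinuousLinearMap.comp_apply]
  rcases eq_or_ne j n with rfl | hj
  · rw [Pop_e_n, map_smul, comm_u0_diag e hd, map_smul, Pop_e_n]
    try module
  · rw [Pop_e_j e hj, map_zero, comm_u0_diag e hd j, map_smul, Pop_e_j e hj, smul_zero]

/-! ### matrix entries of the defect operator -/

lemma conj_inner_skew {C : H →L[ℂ] H} (hC : adjoint C = -C) (x y : H) :
    (starRingEnd ℂ) ⟪x, C y⟫_ℂ = -⟪y, C x⟫_ℂ := by
  rw [inner_conj_symm]
  linear_combination skew_inner hC y x

lemma skew_entry_diag {X : H →L[ℂ] H} (hXskew : adjoint X = -X) (j : ℕ) :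
    (starRingEnd ℂ) ⟪e j, X (e j)⟫_ℂ = -⟪e j, X (e j)⟫_ℂ :=
  conj_inner_skew hXskew (e j) (e j)

lemma entryF {m n : ℕ} (hmn : m ≠ n) {C X : H →L[ℂ] H}
    (hCskew : adjoint C = -C) (hXskew : adjoint X = -X)
    (hcomm : C.comp (Fop e m n) = (Fop e m n).comp C) :
    ⟪e n, (C.comp X - X.comp C) (e m)⟫_ℂ
      + (starRingEnd ℂ) ⟪e n, (C.comp X - X.comp C) (e m)⟫_ℂ = 0 := by
  have hpt : ∀ x, C (Fop e m n x) = Fop e m n (C x) := fun x => by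
    have := ContinuousLinearMap.ext_iff.mp hcomm x
    simpa only [ContinuousLinearMap.comp_apply] using this
  set β := ⟪e n, C (e m)⟫_ℂ with hβ
  set α := ⟪e m, C (e m)⟫_ℂ with hα
  have hCen : C (e n) = (-β) • e m + α • e n := by
    have h2 := hpt (e m)
    rw [Fop_e_m e hmn, map_neg] at h2
    have h3 : C (e n) = -Fop e m n (C (e m)) := by
      linear_combination (norm := module) -h2
    rw [h3, Fop_apply, ← hβ, ← hα]
    module
  have hCem : C (e m) = α • e m + β • e n := by
    have h2 := hpt (e n)
    rw [Fop_e_n e hmn] at h2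
    rw [h2, hCen, map_add, map_smul, map_smul, Fop_e_m e hmn, Fop_e_n e hmn]
    module
  have hαm : ⟪e m, C (e n)⟫_ℂ = -β := by
    rw [hCen, inner_add_right, inner_smul_right, inner_smul_right,
      inner_e_self e, inner_e_ne e hmn]
    ring
  have hβr : (starRingEnd ℂ) β = β := by
    rw [hβ, conj_inner_skew hCskew, hαm]
    ring
  have hαr : (starRingEnd ℂ) α = -α := by
    rw [hα, conj_inner_skew hCskew, ← hα]
  have hT1 : ⟪e n, C (X (e m))⟫_ℂ = β * ⟪e m, X (e m)⟫_ℂ + α * ⟪e n, X (e m)⟫_ℂ := by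
    rw [skew_inner hCskew, hCen, inner_add_left, inner_smul_left, inner_smul_left,
      map_neg, hβr, hαr]
    ring
  have hT2 : ⟪e n, X (C (e m))⟫_ℂ = α * ⟪e n, X (e m)⟫_ℂ + β * ⟪e n, X (e n)⟫_ℂ := by
    rw [hCem, map_add, map_smul, map_smul, inner_add_right, inner_smul_right,
      inner_smul_right]
  have hζ : ⟪e n, (C.comp X - X.comp C) (e m)⟫_ℂ
      = β * (⟪e m, X (e m)⟫_ℂ - ⟪e n, X (e n)⟫_ℂ) := by
    simp only [ContinuousLinearMap.sub_apply, ContinuousLinearMap.comp_apply,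
      inner_sub_right]
    rw [hT1, hT2]
    ring
  rw [hζ, map_mul, map_sub, hβr, skew_entry_diag e hXskew m, skew_entry_diag e hXskew n]
  ring

lemma entryG {m n : ℕ} (hmn : m ≠ n) {C X : H →L[ℂ] H}
    (hCskew : adjoint C = -C) (hXskew : adjoint X = -X)
    (hcomm : C.comp (Gop e m n) = (Gop e m n).comp C) :
    ⟪e n, (C.comp X - X.comp C) (e m)⟫_ℂ
      - (starRingEnd ℂ) ⟪e n, (C.comp X - X.comp C) (e m)⟫_ℂ = 0 := by
  have hpt : ∀ x, C (Gop e m n x) = Gop e m n (C x) := fun x => by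
    have := ContinuousLinearMap.ext_iff.mp hcomm x
    simpa only [ContinuousLinearMap.comp_apply] using this
  have hIne : (Complex.I : ℂ) ≠ 0 := Complex.I_ne_zero
  set β := ⟪e n, C (e m)⟫_ℂ with hβ
  set α := ⟪e m, C (e m)⟫_ℂ with hα
  have hCen : C (e n) = β • e m + α • e n := by
    have h2 := hpt (e m)
    rw [Gop_e_m e hmn, map_smul, Gop_apply, ← hβ, ← hα] at h2
    exact smul_right_injective H hIne h2
  have hαm : ⟪e m, C (e n)⟫_ℂ = β := by
    rw [hCen, inner_add_right, inner_smul_right, inner_smul_right,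
      inner_e_self e, inner_e_ne e hmn]
    ring
  have hnn : ⟪e n, C (e n)⟫_ℂ = α := by
    rw [hCen, inner_add_right, inner_smul_right, inner_smul_right,
      inner_e_self e, inner_e_ne e (Ne.symm hmn)]
    ring
  have hCem : C (e m) = α • e m + β • e n := by
    have h2 := hpt (e n)
    rw [Gop_e_n e hmn, map_smul, Gop_apply] at h2
    have h3 := smul_right_injective H hIne h2
    rw [h3, hnn, hαm]
  have hβr : (starRingEnd ℂ) β = -β := by
    rw [hβ, conj_inner_skew hCskew, hαm]
  have hαr : (starRingEnd ℂ) α = -α := by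
    rw [hα, conj_inner_skew hCskew, ← hα]
  have hT1 : ⟪e n, C (X (e m))⟫_ℂ = β * ⟪e m, X (e m)⟫_ℂ + α * ⟪e n, X (e m)⟫_ℂ := by
    rw [skew_inner hCskew, hCen, inner_add_left, inner_smul_left, inner_smul_left,
      hβr, hαr]
    ring
  have hT2 : ⟪e n, X (C (e m))⟫_ℂ = α * ⟪e n, X (e m)⟫_ℂ + β * ⟪e n, X (e n)⟫_ℂ := by
    rw [hCem, map_add, map_smul, map_smul, inner_add_right, inner_smul_right,
      inner_smul_right]
  have hζ : ⟪e n, (C.comp X - X.comp C) (e m)⟫_ℂ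
      = β * (⟪e m, X (e m)⟫_ℂ - ⟪e n, X (e n)⟫_ℂ) := by
    simp only [ContinuousLinearMap.sub_apply, ContinuousLinearMap.comp_apply,
      inner_sub_right]
    rw [hT1, hT2]
    ring
  rw [hζ, map_mul, map_sub, hβr, skew_entry_diag e hXskew m, skew_entry_diag e hXskew n]
  ring

lemma entryP (n : ℕ) {C X : H →L[ℂ] H}
    (hCskew : adjoint C = -C)
    (hcomm : C.comp (Pop e n) = (Pop e n).comp C) :
    ⟪e n, (C.comp X - X.comp C) (e n)⟫_ℂ = 0 := by
  have hpt : ∀ x, C (Pop e n x) = Pop e n (C x) := fun x => by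
    have := ContinuousLinearMap.ext_iff.mp hcomm x
    simpa only [ContinuousLinearMap.comp_apply] using this
  have hIne : (Complex.I : ℂ) ≠ 0 := Complex.I_ne_zero
  set α := ⟪e n, C (e n)⟫_ℂ with hα
  have hCen : C (e n) = α • e n := by
    have h2 := hpt (e n)
    rw [Pop_e_n, map_smul, Pop_apply, ← hα] at h2
    exact smul_right_injective H hIne h2
  have hαr : (starRingEnd ℂ) α = -α := by
    rw [hα, conj_inner_skew hCskew, ← hα]
  have hT1 : ⟪e n, C (X (e n))⟫_ℂ = α * ⟪e n, X (e n)⟫_ℂ := by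
    rw [skew_inner hCskew, hCen, inner_smul_left, hαr]
    ring
  simp only [ContinuousLinearMap.sub_apply, ContinuousLinearMap.comp_apply,
    inner_sub_right]
  rw [hT1, hCen, map_smul, inner_smul_right]
  ring

end



/-- **Theorem 4.4 (Ayupov–Arzikulov–Umrzaqov).**
Let `H` be a separable infinite-dimensional complex Hilbert space (witnessed by an
orthonormal basis indexed by `ℕ`) and let `Ω` be a topological space.  Every 2-local
spatial derivation `Δ` on the Lie algebra `C(Ω, K_K(H))` of continuous maps from `Ω`
to the skew-adjoint compact operators, implemented by elements of `F(Ω, B_sk(H))`,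
is a spatial derivation: there is a single `a ∈ F(Ω, B_sk(H))` with
`Δ x = a x - x a` for all `x ∈ C(Ω, K_K(H))`
(and `a x - x a ∈ C(Ω, K_K(H))` for all such `x`). -/
theorem two_local_spatial_derivation_on_continuous_compact_skew_maps_is_spatial
    {H : Type*} [NormedAddCommGroup H] [InnerProductSpace ℂ H] [CompleteSpace H]
    (e : HilbertBasis ℕ ℂ H) {Ω : Type*} [TopologicalSpace Ω]
    (Δ : (Ω → H →L[ℂ] H) → (Ω → H →L[ℂ] H))
    (hΔmem : ∀ x ∈ contSkewCompact Ω H, Δ x ∈ contSkewCompact Ω H)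
    (hΔ : ∀ x ∈ contSkewCompact Ω H, ∀ y ∈ contSkewCompact Ω H,
        ∃ a : Ω → H →L[ℂ] H,
          (∀ t, ContinuousLinearMap.adjoint (a t) = -(a t)) ∧
          Δ x = a * x - x * a ∧ Δ y = a * y - y * a) :
    ∃ a : Ω → H →L[ℂ] H,
      (∀ t, ContinuousLinearMap.adjoint (a t) = -(a t)) ∧
      ∀ x ∈ contSkewCompact Ω H,
        Δ x = a * x - x * a ∧ a * x - x * a ∈ contSkewCompact Ω H := by
  classical
  have memConst : ∀ (T : H →L[ℂ] H), ContinuousLinearMap.adjoint T = -T →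
      IsCompactOperator ⇑T → (fun _ : Ω => T) ∈ contSkewCompact Ω H :=
    fun T h1 h2 => ⟨continuous_const, fun _ => ⟨h1, h2⟩⟩
  have memu0 := memConst (u0 e) (adjoint_u0 e) (compact_u0 e)
  have memu1 := memConst (u1 e) (adjoint_u1 e) (compact_u1 e)
  have memF : ∀ m n : ℕ, (fun _ : Ω => Fop e m n) ∈ contSkewCompact Ω H :=
    fun m n => memConst _ (adjoint_Fop e m n) (compact_Fop e m n)
  have memG : ∀ m n : ℕ, (fun _ : Ω => Gop e m n) ∈ contSkewCompact Ω H :=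
    fun m n => memConst _ (adjoint_Gop e m n) (compact_Gop e m n)
  have memP : ∀ n : ℕ, (fun _ : Ω => Pop e n) ∈ contSkewCompact Ω H :=
    fun n => memConst _ (adjoint_Pop e n) (compact_Pop e n)
  obtain ⟨a, haskew, ha0, ha1⟩ := hΔ _ memu0 _ memu1
  have bval : ∀ (y b : Ω → H →L[ℂ] H), Δ y = b * y - y * b → ∀ t : Ω,
      Δ y t = (b t).comp (y t) - (y t).comp (b t) := by
    intro y b hy t
    rw [hy]
    rfl
  have main : ∀ x ∈ contSkewCompact Ω H, Δ x = a * x - x * a := by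
    intro x hx
    funext t
    set B : H →L[ℂ] H := a t with hB
    set X : H →L[ℂ] H := x t with hX
    have hXskew : ContinuousLinearMap.adjoint X = -X := (hx.2 t).1
    -- key facts: Δ of the generators is implemented by a
    have keyF : ∀ m n : ℕ, m ≠ n → Δ (fun _ => Fop e m n) t
        = B.comp (Fop e m n) - (Fop e m n).comp B := by
      intro m n hmn
      obtain ⟨h1, h1skew, hF1, hu0f⟩ := hΔ _ (memF m n) _ memu0
      obtain ⟨h2, h2skew, hF2, hu1f⟩ := hΔ _ (memF m n) _ memu1
      have hd : ((h1 t) - B).comp (u0 e) = (u0 e).comp ((h1 t) - B) :=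
        comm_of_bracket_eq ((bval _ _ hu0f t).symm.trans (bval _ _ ha0 t))
      have hc : ((h2 t) - B).comp (u1 e) = (u1 e).comp ((h2 t) - B) :=
        comm_of_bracket_eq ((bval _ _ hu1f t).symm.trans (bval _ _ ha1 t))
      have hE : ((h1 t) - (h2 t)).comp (Fop e m n) = (Fop e m n).comp ((h1 t) - (h2 t)) :=
        comm_of_bracket_eq ((bval _ _ hF1 t).symm.trans (bval _ _ hF2 t))
      rw [bval _ _ hF2 t]
      exact stepF e hmn (haskew t) (h2skew t) hd hc hE
    have keyG : ∀ m n : ℕ, m ≠ n → Δ (fun _ => Gop e m n) t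
        = B.comp (Gop e m n) - (Gop e m n).comp B := by
      intro m n hmn
      obtain ⟨h1, h1skew, hF1, hu0f⟩ := hΔ _ (memG m n) _ memu0
      obtain ⟨h2, h2skew, hF2, hu1f⟩ := hΔ _ (memG m n) _ memu1
      have hd : ((h1 t) - B).comp (u0 e) = (u0 e).comp ((h1 t) - B) :=
        comm_of_bracket_eq ((bval _ _ hu0f t).symm.trans (bval _ _ ha0 t))
      have hc : ((h2 t) - B).comp (u1 e) = (u1 e).comp ((h2 t) - B) :=
        comm_of_bracket_eq ((bval _ _ hu1f t).symm.trans (bval _ _ ha1 t))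
      have hE : ((h1 t) - (h2 t)).comp (Gop e m n) = (Gop e m n).comp ((h1 t) - (h2 t)) :=
        comm_of_bracket_eq ((bval _ _ hF1 t).symm.trans (bval _ _ hF2 t))
      rw [bval _ _ hF2 t]
      exact stepG e hmn (haskew t) (h2skew t) hd hc hE
    have keyP : ∀ n : ℕ, Δ (fun _ => Pop e n) t
        = B.comp (Pop e n) - (Pop e n).comp B := by
      intro n
      obtain ⟨h1, h1skew, hP1, hu0f⟩ := hΔ _ (memP n) _ memu0
      have hd : ((h1 t) - B).comp (u0 e) = (u0 e).comp ((h1 t) - B) :=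
        comm_of_bracket_eq ((bval _ _ hu0f t).symm.trans (bval _ _ ha0 t))
      rw [bval _ _ hP1 t]
      exact stepP e n hd
    -- now show the defect vanishes
    have hzero : ∀ k : ℕ, Δ x t (e k) - (B.comp X - X.comp B) (e k) = 0 := by
      intro k
      apply vec_eq_zero e
      intro j
      rcases eq_or_ne j k with rfl | hjk
      · -- diagonal entry, use Pop
        obtain ⟨h1, h1skew, hx1, hP1⟩ := hΔ x hx _ (memP j)
        have hCskew : ContinuousLinearMap.adjoint (h1 t - B) = -(h1 t - B) := by
          rw [map_sub, h1skew t, haskew t]; abel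
        have hcomm : (h1 t - B).comp (Pop e j) = (Pop e j).comp (h1 t - B) :=
          comm_of_bracket_eq ((bval _ _ hP1 t).symm.trans (keyP j))
        have hval : Δ x t (e j) - (B.comp X - X.comp B) (e j)
            = ((h1 t - B).comp X - X.comp (h1 t - B)) (e j) := by
          have hxt := bval _ _ hx1 t
          rw [hxt, hX]
          simp only [ContinuousLinearMap.sub_apply, ContinuousLinearMap.comp_apply,
            map_sub]
          module
        rw [hval]
        exact entryP e j hCskew hcomm
      · -- off-diagonal entry, use Fop and Gop
        obtain ⟨hf, hfskew, hxf, hFf⟩ := hΔ x hx _ (memF k j)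
        obtain ⟨hg, hgskew, hxg, hGg⟩ := hΔ x hx _ (memG k j)
        have hkj : k ≠ j := Ne.symm hjk
        have hCFskew : ContinuousLinearMap.adjoint (hf t - B) = -(hf t - B) := by
          rw [map_sub, hfskew t, haskew t]; abel
        have hCGskew : ContinuousLinearMap.adjoint (hg t - B) = -(hg t - B) := by
          rw [map_sub, hgskew t, haskew t]; abel
        have hcommF : (hf t - B).comp (Fop e k j) = (Fop e k j).comp (hf t - B) :=
          comm_of_bracket_eq ((bval _ _ hFf t).symm.trans (keyF k j hkj))
        have hcommG : (hg t - B).comp (Gop e k j) = (Gop e k j).comp (hg t - B) :=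
          comm_of_bracket_eq ((bval _ _ hGg t).symm.trans (keyG k j hkj))
        have hvalF : Δ x t (e k) - (B.comp X - X.comp B) (e k)
            = ((hf t - B).comp X - X.comp (hf t - B)) (e k) := by
          have hxt := bval _ _ hxf t
          rw [hxt, hX]
          simp only [ContinuousLinearMap.sub_apply, ContinuousLinearMap.comp_apply,
            map_sub]
          module
        have hvalG : Δ x t (e k) - (B.comp X - X.comp B) (e k)
            = ((hg t - B).comp X - X.comp (hg t - B)) (e k) := by
          have hxt := bval _ _ hxg t
          rw [hxt, hX]
          simp only [ContinuousLinearMap.sub_apply, ContinuousLinearMap.comp_apply,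
            map_sub]
          module
        have s1 := entryF e hkj hCFskew hXskew hcommF
        have s2 := entryG e hkj hCGskew hXskew hcommG
        have hFG : ((hg t - B).comp X - X.comp (hg t - B)) (e k)
            = ((hf t - B).comp X - X.comp (hf t - B)) (e k) :=
          hvalG.symm.trans hvalF
        rw [hFG] at s2
        rw [hvalF]
        linear_combination (s1 + s2) / 2
    have hop : Δ x t = B.comp X - X.comp B := by
      apply clm_ext_basis e
      intro k
      have := sub_eq_zero.mp (hzero k)
      simpa using this
    rw [hop]
    rfl
  refine ⟨a, haskew, ?_⟩
  intro x hx
  refine ⟨main x hx, ?_⟩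
  rw [← main x hx]
  exact hΔmem x hx
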